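/- Two elements w, v ∈ S = K ≀_Γ Sym(Γ) are conjugate in S if and only if L(w) = L(v) and |C(L,w)| = |C(L,v)| for all loads L ∈ L(w); that is, they have, for each load, the same number of wreath cycles of that load in their disjoint wreath cycle decompositions. -/

import Mathlib

set_option linter.unusedSectionVars false

/-- The wreath product `K ≀_Γ Sym(Γ)` (with right-action conventions from the paper):
multiplication `(f,h)(e,g) = (f · e^{h⁻¹}, hg)` where `[γ](f·e^{h⁻¹}) = [γ]f * [γ^h]e`. -/
structure Wr (K : Type*) (Γ : Type*) where
  base : Γ → K
  top : Equiv.Perm Γ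

namespace Wr

variable {K Γ : Type*} [Group K]

theorem ext' {w v : Wr K Γ} (h1 : w.base = v.base) (h2 : w.top = v.top) : w = v := by
  cases w; cases v; cases h1; cases h2; rfl

instance : Group (Wr K Γ) where
  mul w v := ⟨fun γ => w.base γ * v.base (w.top γ), w.top.trans v.top⟩
  one := ⟨fun _ => 1, 1⟩
  inv w := ⟨fun γ => (w.base (w.top⁻¹ γ))⁻¹, w.top⁻¹⟩
  mul_assoc a b c := ext' (funext fun γ => mul_assoc _ _ _) (Equiv.trans_assoc _ _ _)
  one_mul a := ext' (funext fun γ => one_mul _) (Equiv.refl_trans _)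
  mul_one a := ext' (funext fun γ => mul_one _) (Equiv.trans_refl _)
  inv_mul_cancel a := ext' (funext fun γ => inv_mul_cancel _) (Equiv.symm_trans_self _)

/-- The support of a permutation, as a set. -/
def psupp (h : Equiv.Perm Γ) : Set Γ := {γ | h γ ≠ γ}

/-- The territory of a wreath product element. -/
def terr (w : Wr K Γ) : Set Γ := psupp w.top ∪ {γ | w.base γ ≠ 1}

/-- Wreath cycles: either trivial top and a singleton territory, or the top is a
single nontrivial cycle and the territory equals its support. -/
def IsWreathCycle (w : Wr K Γ) : Prop :=
  (w.top = 1 ∧ ∃ γ₀, terr w = {γ₀}) ∨ (w.top.IsCycle ∧ terr w = psupp w.top)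

/-- The yade of `w` at `γ`: the ordered product `∏_{i=0}^{|h|-1} [γ^{h^i}]f`. -/
noncomputable def yade (w : Wr K Γ) (γ : Γ) : K :=
  ((List.range (orderOf w.top)).map fun i => w.base ((w.top ^ i) γ)).prod

end Wr

open Wr

namespace Wr

variable {K Γ : Type*} [Group K] [Fintype Γ] [DecidableEq Γ]

/-- The load of a wreath cycle: the conjugacy class of its yades over the territory,
together with the order of the top component. -/
noncomputable def load (z : Wr K Γ) : Set K × ℕ :=
  ({x | ∃ γ ∈ terr z, IsConj (yade z γ) x}, orderOf z.top)

/-- The set of wreath cycles occurring in the disjoint wreath cycle decomposition of `w`. -/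
def wCycles (w : Wr K Γ) : Set (Wr K Γ) :=
  {z | ∃ c ∈ w.top.cycleFactorsFinset,
        z = Wr.mk (fun γ => if c γ ≠ γ then w.base γ else 1) c} ∪
  {z | ∃ γ₀, w.top γ₀ = γ₀ ∧ w.base γ₀ ≠ 1 ∧
        z = Wr.mk (fun γ => if γ = γ₀ then w.base γ else 1) 1}

/-- The territory decomposition `P(w)`: for each load `L`, the set of territories of
the wreath cycles of `w` of load `L`. -/
noncomputable def tdecomp (w : Wr K Γ) : Set K × ℕ → Set (Set Γ) :=
  fun L => {Ω | ∃ z ∈ wCycles w, load z = L ∧ Ω = terr z}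

end Wr

/-! Conjugating by `s = (g, σ)` carries the wreath cycles of `w` one by one onto those of
`s * w * s⁻¹`, and the yade of the image at `γ` is the yade at `σ γ` conjugated by `g γ`, so
loads, and hence the numbers of wreath cycles of each load, are conjugacy invariants.
Conversely, matching the wreath cycles of `v` and `w` load by load, two matched wreath cycles
are conjugate by an element living on their territories; the territories being disjoint, these
local conjugators glue to one on `terr v`, which extends to all of `Γ` since both elements act
trivially off their territories. -/

theorem Set.Finite.exists_bijOn_of_ncard_fiber_eq {α ι : Type*} {f : α → ι} {s t : Set α}
    (hs : s.Finite) (ht : t.Finite)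
    (h : ∀ i, {x ∈ s | f x = i}.ncard = {x ∈ t | f x = i}.ncard) :
    ∃ φ : α → α, Set.BijOn φ s t ∧ ∀ x ∈ s, f (φ x) = f x := by
  rcases isEmpty_or_nonempty α with hα | hα
  · exact ⟨id, by simp [Set.eq_empty_of_isEmpty], by simp⟩
  have hfiber (i : ι) : ∃ φ : α → α, Set.BijOn φ {x ∈ s | f x = i} {x ∈ t | f x = i} :=
    (hs.sep _).exists_bijOn_of_encard_eq <| by
      rw [← (hs.sep _).cast_ncard_eq, ← (ht.sep _).cast_ncard_eq, h]
  choose φ hφ using hfiber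
  have hmaps {x : α} (hx : x ∈ s) : φ (f x) x ∈ t ∧ f (φ (f x) x) = f x :=
    (hφ (f x)).mapsTo ⟨hx, rfl⟩
  refine ⟨fun x => φ (f x) x, ⟨fun x hx => (hmaps hx).1, fun x hx y hy hxy => ?_,
    fun y hy => ?_⟩, fun x hx => (hmaps hx).2⟩
  · have hf : f y = f x := by
      rw [← (hmaps hx).2, ← (hmaps hy).2]
      exact congrArg f hxy.symm
    refine (hφ (f x)).injOn ⟨hx, rfl⟩ ⟨hy, hf⟩ ?_
    simpa only [hf] using hxy
  · obtain ⟨x, ⟨hx, hfx⟩, hxy⟩ := (hφ (f y)).surjOn ⟨hy, rfl⟩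
    exact ⟨x, hx, by simpa only [hfx] using hxy⟩

namespace Wr

open Equiv Set

variable {K Γ : Type*} [Group K]

/-- The equation `c * w = v * c` for `c = ⟨g, σ⟩`, read at the points of `Ω`. -/
def Intertwines (σ : Γ → Γ) (g : Γ → K) (w v : Wr K Γ) (Ω : Set Γ) : Prop :=
  ∀ γ ∈ Ω, w.top (σ γ) = σ (v.top γ) ∧ g γ * w.base (σ γ) = v.base γ * g (v.top γ)

theorem isConj_iff_exists_intertwines {w v : Wr K Γ} :
    IsConj w v ↔ ∃ (σ : Perm Γ) (g : Γ → K), Intertwines σ g w v univ := by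
  rw [isConj_iff]
  constructor
  · rintro ⟨c, rfl⟩
    refine ⟨c.top, c.base, fun γ _ => ?_⟩
    have h : c * w = c * w * c⁻¹ * c := by group
    exact ⟨congrArg (fun x => x.top γ) h, congrArg (fun x => x.base γ) h⟩
  · rintro ⟨σ, g, h⟩
    refine ⟨⟨g, σ⟩, mul_inv_eq_of_eq_mul (ext' (funext fun γ => ?_) (Perm.ext fun γ => ?_))⟩
    exacts [(h γ trivial).2, (h γ trivial).1]

lemma apply_mem_terr {w : Wr K Γ} {γ : Γ} (hγ : γ ∈ terr w) : w.top γ ∈ terr w := by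
  by_cases h : w.top γ = γ
  · rwa [h]
  · exact Or.inl fun h' => h (w.top.injective h')

lemma notMem_terr_iff {w : Wr K Γ} {γ : Γ} : γ ∉ terr w ↔ w.top γ = γ ∧ w.base γ = 1 := by
  simp [terr, psupp, not_or]

lemma pow_apply_mem_terr {w : Wr K Γ} {γ : Γ} (hγ : γ ∈ terr w) (k : ℕ) :
    (w.top ^ k) γ ∈ terr w := by
  induction k with
  | zero => exact hγ
  | succ k ih => rw [pow_succ', Perm.mul_apply]; exact apply_mem_terr ih

noncomputable def partialYade (w : Wr K Γ) (γ : Γ) (k : ℕ) : K :=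
  ((List.range k).map fun i => w.base ((w.top ^ i) γ)).prod

lemma yade_eq_partialYade (w : Wr K Γ) (γ : Γ) : yade w γ = partialYade w γ (orderOf w.top) := rfl

@[simp] lemma partialYade_zero (w : Wr K Γ) (γ : Γ) : partialYade w γ 0 = 1 := rfl

lemma partialYade_succ (w : Wr K Γ) (γ : Γ) (k : ℕ) :
    partialYade w γ (k + 1) = partialYade w γ k * w.base ((w.top ^ k) γ) := by
  simp [partialYade, List.range_succ]

lemma partialYade_add (w : Wr K Γ) (γ : Γ) (m k : ℕ) :
    partialYade w γ (m + k) = partialYade w γ m * partialYade w ((w.top ^ m) γ) k := by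
  induction k with
  | zero => simp
  | succ k ih => rw [← add_assoc, partialYade_succ, ih, partialYade_succ, mul_assoc,
      ← Perm.mul_apply, ← pow_add, add_comm k m]

lemma partialYade_add_orderOf (w : Wr K Γ) (γ : Γ) (k : ℕ) :
    partialYade w γ (k + orderOf w.top) = yade w γ * partialYade w γ k := by
  rw [add_comm, partialYade_add, pow_orderOf_eq_one, Perm.one_apply, yade_eq_partialYade]

section Conj

variable (s z : Wr K Γ)

lemma conj_top : (s * z * s⁻¹).top = s.top⁻¹ * z.top * s.top :=
  rfl

lemma conj_base (γ : Γ) : (s * z * s⁻¹).base γ =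
    s.base γ * z.base (s.top γ) * (s.base (s.top⁻¹ (z.top (s.top γ))))⁻¹ :=
  rfl

lemma conj_top_pow_apply (k : ℕ) (γ : Γ) :
    ((s * z * s⁻¹).top ^ k) γ = s.top⁻¹ ((z.top ^ k) (s.top γ)) := by
  have h := conj_pow (a := s.top⁻¹) (b := z.top) (i := k)
  rw [inv_inv] at h
  rw [conj_top, h]
  rfl

lemma orderOf_conj_top : orderOf (s * z * s⁻¹).top = orderOf z.top := by
  rw [conj_top]
  exact (SemiconjBy.orderOf_eq s.top⁻¹ (by simp [SemiconjBy, mul_assoc])).symm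

lemma terr_conj : terr (s * z * s⁻¹) = s.top ⁻¹' terr z := by
  ext γ
  rw [mem_preimage, ← not_iff_not, notMem_terr_iff, notMem_terr_iff, conj_base, conj_top]
  simp only [Perm.mul_apply, Perm.inv_eq_iff_eq]
  constructor
  · rintro ⟨h, hb⟩
    simp only [h, Perm.coe_inv, symm_apply_apply, mul_inv_eq_one, mul_eq_left] at hb
    exact ⟨h, hb⟩
  · rintro ⟨h, hb⟩
    simp [h, hb]

lemma partialYade_conj (γ : Γ) (k : ℕ) : partialYade (s * z * s⁻¹) γ k =
    s.base γ * partialYade z (s.top γ) k * (s.base (s.top⁻¹ ((z.top ^ k) (s.top γ))))⁻¹ := by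
  induction k with
  | zero => simp
  | succ k ih =>
    rw [partialYade_succ, ih, partialYade_succ, conj_top_pow_apply, conj_base, pow_succ',
      Perm.mul_apply]
    simp only [Perm.coe_inv, apply_symm_apply]
    group

lemma yade_conj (γ : Γ) :
    yade (s * z * s⁻¹) γ = s.base γ * yade z (s.top γ) * (s.base γ)⁻¹ := by
  rw [yade_eq_partialYade, orderOf_conj_top, partialYade_conj, pow_orderOf_eq_one,
    Perm.one_apply, ← yade_eq_partialYade, Perm.coe_inv, symm_apply_apply]

lemma load_conj : load (s * z * s⁻¹) = load z := by
  refine Prod.ext (Set.ext fun x => ⟨?_, ?_⟩) (orderOf_conj_top s z)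
  · rintro ⟨γ, hγ, hx⟩
    rw [yade_conj] at hx
    exact ⟨s.top γ, (terr_conj s z).subset hγ, (isConj_iff.mpr ⟨_, rfl⟩).trans hx⟩
  · rintro ⟨δ, hδ, hx⟩
    refine ⟨s.top⁻¹ δ, by simpa [terr_conj] using hδ, ?_⟩
    rw [yade_conj, Perm.coe_inv, apply_symm_apply]
    exact (isConj_iff.mpr ⟨_, rfl⟩).symm.trans hx

end Conj

section Components

variable [DecidableEq Γ]

def cycleComponent (w : Wr K Γ) (c : Perm Γ) : Wr K Γ :=
  ⟨fun γ => if c γ ≠ γ then w.base γ else 1, c⟩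

def pointComponent (w : Wr K Γ) (γ₀ : Γ) : Wr K Γ :=
  ⟨fun γ => if γ = γ₀ then w.base γ else 1, 1⟩

lemma terr_cycleComponent (w : Wr K Γ) (c : Perm Γ) : terr (cycleComponent w c) = psupp c := by
  ext γ
  by_cases h : c γ = γ <;> simp [terr, psupp, cycleComponent, h]

lemma terr_pointComponent {w : Wr K Γ} {γ₀ : Γ} (h : w.base γ₀ ≠ 1) :
    terr (pointComponent w γ₀) = {γ₀} := by
  ext γ
  by_cases hγ : γ = γ₀ <;> simp [terr, psupp, pointComponent, hγ, h]

lemma conj_cycleComponent (s w : Wr K Γ) {c : Perm Γ}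
    (hc : ∀ γ, c γ ≠ γ → c γ = w.top γ) :
    s * cycleComponent w c * s⁻¹ = cycleComponent (s * w * s⁻¹) (s.top⁻¹ * c * s.top) := by
  refine ext' (funext fun γ => ?_) (conj_top _ _)
  simp only [conj_base, cycleComponent, Perm.mul_apply, ne_eq, Perm.inv_eq_iff_eq]
  by_cases h : c (s.top γ) = s.top γ
  · simp [h]
  · have hw : w.top (s.top γ) ≠ s.top γ := hc _ h ▸ h
    simp [hc _ h, hw]

lemma conj_pointComponent (s w : Wr K Γ) {γ₀ : Γ} (h : w.top γ₀ = γ₀) :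
    s * pointComponent w γ₀ * s⁻¹ = pointComponent (s * w * s⁻¹) (s.top⁻¹ γ₀) := by
  refine ext' (funext fun γ => ?_) (by rw [conj_top]; simp [pointComponent])
  simp only [conj_base, pointComponent, Perm.one_apply, Perm.coe_inv, symm_apply_apply,
    eq_symm_apply]
  by_cases hγ : s.top γ = γ₀
  · subst hγ
    simp [h]
  · simp [hγ]

variable [Fintype Γ]

lemma mem_wCycles {w z : Wr K Γ} : z ∈ wCycles w ↔
    (∃ c ∈ w.top.cycleFactorsFinset, z = cycleComponent w c) ∨
      ∃ γ₀, w.top γ₀ = γ₀ ∧ w.base γ₀ ≠ 1 ∧ z = pointComponent w γ₀ :=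
  Iff.rfl

/-- The wreath cycle of `w` whose territory contains `γ`; junk unless `γ ∈ terr w`. -/
def wCycleOf (w : Wr K Γ) (γ : Γ) : Wr K Γ :=
  if w.top γ = γ then pointComponent w γ else cycleComponent w (w.top.cycleOf γ)

lemma wCycleOf_mem_wCycles {w : Wr K Γ} {γ : Γ} (hγ : γ ∈ terr w) :
    wCycleOf w γ ∈ wCycles w := by
  unfold wCycleOf
  split_ifs with h
  · exact Or.inr ⟨γ, h, (hγ.resolve_left (not_not.mpr h)), rfl⟩
  · exact Or.inl ⟨_, Perm.cycleOf_mem_cycleFactorsFinset_iff.mpr (Perm.mem_support.mpr h), rfl⟩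

lemma mem_terr_wCycleOf {w : Wr K Γ} {γ : Γ} (hγ : γ ∈ terr w) : γ ∈ terr (wCycleOf w γ) := by
  unfold wCycleOf
  split_ifs with h
  · rw [terr_pointComponent (hγ.resolve_left (not_not.mpr h))]
    rfl
  · rw [terr_cycleComponent]
    simpa [psupp, Perm.cycleOf_apply_self] using h

section MemWCycles

variable {w z : Wr K Γ}

lemma isWreathCycle_of_mem_wCycles (hz : z ∈ wCycles w) : IsWreathCycle z := by
  rcases mem_wCycles.mp hz with ⟨c, hc, rfl⟩ | ⟨γ₀, -, hb, rfl⟩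
  · exact Or.inr ⟨(Perm.mem_cycleFactorsFinset_iff.mp hc).1, terr_cycleComponent w c⟩
  · exact Or.inl ⟨rfl, γ₀, terr_pointComponent hb⟩

lemma top_apply_of_mem_wCycles (hz : z ∈ wCycles w) {γ : Γ} (hγ : γ ∈ terr z) :
    z.top γ = w.top γ := by
  rcases mem_wCycles.mp hz with ⟨c, hc, rfl⟩ | ⟨γ₀, hfix, hb, rfl⟩
  · rw [terr_cycleComponent] at hγ
    exact (Perm.mem_cycleFactorsFinset_iff.mp hc).2 γ (Perm.mem_support.mpr hγ)
  · rw [terr_pointComponent hb, mem_singleton_iff] at hγ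
    subst hγ
    exact hfix.symm

lemma base_of_mem_wCycles (hz : z ∈ wCycles w) {γ : Γ} (hγ : γ ∈ terr z) :
    z.base γ = w.base γ := by
  rcases mem_wCycles.mp hz with ⟨c, -, rfl⟩ | ⟨γ₀, -, hb, rfl⟩
  · rw [terr_cycleComponent] at hγ
    exact if_pos hγ
  · rw [terr_pointComponent hb, mem_singleton_iff] at hγ
    exact if_pos hγ

lemma terr_subset_of_mem_wCycles (hz : z ∈ wCycles w) : terr z ⊆ terr w := by
  rcases mem_wCycles.mp hz with ⟨c, hc, rfl⟩ | ⟨γ₀, -, hb, rfl⟩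
  · rw [terr_cycleComponent]
    intro γ hγ
    exact Or.inl (Perm.mem_support.mp
      (Perm.mem_cycleFactorsFinset_support_le hc (Perm.mem_support.mpr hγ)))
  · rw [terr_pointComponent hb, singleton_subset_iff]
    exact Or.inr hb

lemma eq_wCycleOf (hz : z ∈ wCycles w) {γ : Γ} (hγ : γ ∈ terr z) : z = wCycleOf w γ := by
  have htop := top_apply_of_mem_wCycles hz hγ
  rcases mem_wCycles.mp hz with ⟨c, hc, rfl⟩ | ⟨γ₀, hfix, hb, rfl⟩
  · rw [terr_cycleComponent] at hγ
    have hw : w.top γ ≠ γ := htop ▸ hγ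
    rw [wCycleOf, if_neg hw, ← Perm.cycle_is_cycleOf (Perm.mem_support.mpr hγ) hc]
  · rw [terr_pointComponent hb, mem_singleton_iff] at hγ
    subst hγ
    rw [wCycleOf, if_pos hfix]

end MemWCycles

lemma finite_wCycles (w : Wr K Γ) : (wCycles w).Finite := by
  refine ((w.top.cycleFactorsFinset.finite_toSet.image (cycleComponent w)).union
    (finite_range (pointComponent w))).subset ?_
  rintro z (⟨c, hc, rfl⟩ | ⟨γ₀, -, -, rfl⟩)
  exacts [Or.inl ⟨c, hc, rfl⟩, Or.inr ⟨γ₀, rfl⟩]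

lemma mem_wCycles_conj (s : Wr K Γ) {w z : Wr K Γ} (hz : z ∈ wCycles w) :
    s * z * s⁻¹ ∈ wCycles (s * w * s⁻¹) := by
  rcases mem_wCycles.mp hz with ⟨c, hc, rfl⟩ | ⟨γ₀, hfix, hb, rfl⟩
  · refine Or.inl ⟨s.top⁻¹ * c * s.top, ?_, conj_cycleComponent s w fun γ hγ =>
      (Perm.mem_cycleFactorsFinset_iff.mp hc).2 γ (Perm.mem_support.mpr hγ)⟩
    have h := (Perm.mem_cycleFactorsFinset_conj w.top s.top⁻¹ c).mpr hc
    rwa [inv_inv, ← conj_top] at h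
  · refine Or.inr ⟨s.top⁻¹ γ₀, ?_, ?_, conj_pointComponent s w hfix⟩
    · simp [conj_top, hfix]
    · simpa [conj_base, hfix] using hb

lemma wCycles_conj (s w : Wr K Γ) :
    wCycles (s * w * s⁻¹) = (fun z => s * z * s⁻¹) '' wCycles w := by
  refine Subset.antisymm (fun z hz => ⟨s⁻¹ * z * s⁻¹⁻¹, ?_, by group⟩)
    (image_subset_iff.mpr fun z hz => mem_wCycles_conj s hz)
  simpa only [show s⁻¹ * (s * w * s⁻¹) * s⁻¹⁻¹ = w by group] using mem_wCycles_conj s⁻¹ hz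

lemma ncard_load_conj (s w : Wr K Γ) (L : Set K × ℕ) :
    {z ∈ wCycles (s * w * s⁻¹) | load z = L}.ncard = {z ∈ wCycles w | load z = L}.ncard := by
  have h : {z ∈ wCycles (s * w * s⁻¹) | load z = L} =
      MulAut.conj s '' {z ∈ wCycles w | load z = L} := by
    ext z
    simp only [wCycles_conj, MulAut.conj_apply, mem_sep_iff, mem_image]
    constructor
    · rintro ⟨⟨z, hz, rfl⟩, hL⟩
      exact ⟨z, ⟨hz, load_conj s z ▸ hL⟩, rfl⟩
    · rintro ⟨z, ⟨hz, hL⟩, rfl⟩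
      exact ⟨⟨z, hz, rfl⟩, (load_conj s z).trans hL⟩
  rw [h, ncard_image_of_injective _ (MulAut.conj s).injective]

end Components

namespace IsWreathCycle

variable {z : Wr K Γ}

lemma terr_nonempty (hz : IsWreathCycle z) : (terr z).Nonempty := by
  rcases hz with ⟨_, γ₀, h⟩ | ⟨⟨x, hx, _⟩, h⟩
  · exact h ▸ singleton_nonempty γ₀
  · exact h ▸ ⟨x, hx⟩

variable [Finite Γ] {a : Γ}

lemma exists_pow_apply_eq (hz : IsWreathCycle z) (ha : a ∈ terr z) {δ : Γ} (hδ : δ ∈ terr z) :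
    ∃ k : ℕ, (z.top ^ k) a = δ := by
  rcases hz with ⟨_, γ₀, h⟩ | ⟨hc, h⟩
  · rw [h] at ha hδ
    exact ⟨0, by rw [ha, hδ]; rfl⟩
  · rw [h] at ha hδ
    exact (hc.sameCycle ha hδ).exists_nat_pow_eq

lemma modEq_of_pow_apply_eq (hz : IsWreathCycle z) (ha : a ∈ terr z) {k j : ℕ}
    (h : (z.top ^ k) a = (z.top ^ j) a) : k ≡ j [MOD orderOf z.top] := by
  rcases hz with ⟨h1, -⟩ | ⟨hc, ht⟩
  · rw [h1, orderOf_one]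
    exact Nat.modEq_one
  · rw [ht] at ha
    exact pow_eq_pow_iff_modEq.mp (hc.pow_eq_pow_iff.mpr ⟨a, ha, h⟩)

/-- With `a ∈ terr z`, `a' ∈ terr z'` and `u * yade z a * u⁻¹ = yade z' a'`, the conjugator
sends `(z'.top ^ k) a'` to `(z.top ^ k) a`, with base
`(partialYade z' a' k)⁻¹ * u * partialYade z a k` there; both are periodic in `k` with period
the common order of the tops, hence well defined. -/
theorem exists_intertwines {z' : Wr K Γ} (hz : IsWreathCycle z) (hz' : IsWreathCycle z')
    (hL : load z = load z') :
    ∃ (σ : Γ → Γ) (g : Γ → K), BijOn σ (terr z') (terr z) ∧ Intertwines σ g z z' (terr z') := by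
  obtain ⟨a', ha'⟩ := hz'.terr_nonempty
  obtain ⟨a, ha, hconj⟩ : yade z' a' ∈ (load z).1 := hL ▸ ⟨a', ha', IsConj.refl _⟩
  obtain ⟨u, hu⟩ := isConj_iff.mp hconj
  have hn : orderOf z'.top = orderOf z.top := (congrArg Prod.snd hL).symm
  set G : ℕ → K := fun k => (partialYade z' a' k)⁻¹ * u * partialYade z a k with hG_def
  have hG : Function.Periodic G (orderOf z.top) := fun k => by
    simp only [hG_def]
    rw [partialYade_add_orderOf, ← hn, partialYade_add_orderOf, ← hu]
    group
  choose! idx hidx using fun γ (hγ : γ ∈ terr z') => hz'.exists_pow_apply_eq ha' hγ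
  have hidx_modEq (k : ℕ) : idx ((z'.top ^ k) a') ≡ k [MOD orderOf z.top] :=
    hn ▸ hz'.modEq_of_pow_apply_eq ha' (hidx _ (pow_apply_mem_terr ha' k))
  refine ⟨fun γ => (z.top ^ idx γ) a, fun γ => G (idx γ), ?_⟩
  have hσ (k : ℕ) : (z.top ^ idx ((z'.top ^ k) a')) a = (z.top ^ k) a := by
    rw [pow_eq_pow_iff_modEq.mpr (hidx_modEq k)]
  have hg (k : ℕ) : G (idx ((z'.top ^ k) a')) = G k := by
    rw [← hG.map_mod_nat, hidx_modEq k, hG.map_mod_nat]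
  refine ⟨⟨?_, ?_, ?_⟩, ?_⟩
  · intro γ hγ
    obtain ⟨k, rfl⟩ := hz'.exists_pow_apply_eq ha' hγ
    simpa only [hσ] using pow_apply_mem_terr ha k
  · intro γ₁ hγ₁ γ₂ hγ₂ h
    obtain ⟨k₁, rfl⟩ := hz'.exists_pow_apply_eq ha' hγ₁
    obtain ⟨k₂, rfl⟩ := hz'.exists_pow_apply_eq ha' hγ₂
    simp only [hσ] at h
    have hk : k₁ ≡ k₂ [MOD orderOf z'.top] := hn ▸ hz.modEq_of_pow_apply_eq ha h
    rw [pow_eq_pow_iff_modEq.mpr hk]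
  · intro δ hδ
    obtain ⟨k, rfl⟩ := hz.exists_pow_apply_eq ha hδ
    exact ⟨(z'.top ^ k) a', pow_apply_mem_terr ha' k, hσ k⟩
  · intro γ hγ
    obtain ⟨k, rfl⟩ := hz'.exists_pow_apply_eq ha' hγ
    have hsucc (w : Wr K Γ) (x : Γ) : w.top ((w.top ^ k) x) = (w.top ^ (k + 1)) x := by
      rw [pow_succ', Perm.mul_apply]
    refine ⟨by simp only [hsucc, hσ], ?_⟩
    simp only [hsucc, hσ, hg]
    simp only [hG_def, partialYade_succ]
    group

end IsWreathCycle

theorem isConj_of_bijOn_intertwines [Finite Γ] {w v : Wr K Γ} {σ : Γ → Γ} {g : Γ → K}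
    (hσ : BijOn σ (terr v) (terr w)) (h : Intertwines σ g w v (terr v)) : IsConj w v := by
  classical
  set e : Perm Γ := (hσ.equiv σ).extendSubtype
  have he {γ : Γ} (hγ : γ ∈ terr v) : e γ = σ γ :=
    (hσ.equiv σ).extendSubtype_apply_of_mem γ hγ
  refine isConj_iff_exists_intertwines.mpr ⟨e, fun γ => if γ ∈ terr v then g γ else 1,
    fun γ _ => ?_⟩
  by_cases hγ : γ ∈ terr v
  · have hγ' := apply_mem_terr hγ
    simp only [he hγ, he hγ', if_pos hγ, if_pos hγ']
    exact h γ hγ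
  · obtain ⟨htop, hbase⟩ := notMem_terr_iff.mp hγ
    have hout : e γ ∉ terr w := (hσ.equiv σ).extendSubtype_not_mem γ hγ
    obtain ⟨htop', hbase'⟩ := notMem_terr_iff.mp hout
    simp only [htop, htop', hbase, hbase', if_neg hγ, and_self]

variable [Fintype Γ] [DecidableEq Γ]

lemma wCycleOf_top_apply {w : Wr K Γ} {γ : Γ} (hγ : γ ∈ terr w) :
    wCycleOf w (w.top γ) = wCycleOf w γ := by
  have hz := wCycleOf_mem_wCycles hγ
  have htop := top_apply_of_mem_wCycles hz (mem_terr_wCycleOf hγ)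
  exact (eq_wCycleOf hz (htop ▸ apply_mem_terr (mem_terr_wCycleOf hγ))).symm

section Glue

variable {w v : Wr K Γ} {Ψ : Wr K Γ → Wr K Γ} {σ : Wr K Γ → Γ → Γ}

lemma bijOn_glue (hΨ : BijOn Ψ (wCycles v) (wCycles w))
    (hσ : ∀ z ∈ wCycles v, BijOn (σ z) (terr z) (terr (Ψ z))) :
    BijOn (fun γ => σ (wCycleOf v γ) γ) (terr v) (terr w) := by
  have hz {γ : Γ} (hγ : γ ∈ terr v) := wCycleOf_mem_wCycles hγ
  have hσz {γ : Γ} (hγ : γ ∈ terr v) : σ (wCycleOf v γ) γ ∈ terr (Ψ (wCycleOf v γ)) :=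
    (hσ _ (hz hγ)).mapsTo (mem_terr_wCycleOf hγ)
  refine ⟨fun γ hγ => terr_subset_of_mem_wCycles (hΨ.mapsTo (hz hγ)) (hσz hγ),
    fun γ₁ hγ₁ γ₂ hγ₂ h => ?_, fun δ hδ => ?_⟩
  · simp only at h
    have hΨeq : Ψ (wCycleOf v γ₁) = Ψ (wCycleOf v γ₂) := by
      rw [eq_wCycleOf (hΨ.mapsTo (hz hγ₁)) (hσz hγ₁),
        eq_wCycleOf (hΨ.mapsTo (hz hγ₂)) (hσz hγ₂), h]
    have hzeq := hΨ.injOn (hz hγ₁) (hz hγ₂) hΨeq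
    rw [hzeq] at h
    exact (hσ _ (hz hγ₂)).injOn (hzeq ▸ mem_terr_wCycleOf hγ₁) (mem_terr_wCycleOf hγ₂) h
  · obtain ⟨z, hzv, hΨz⟩ := hΨ.surjOn (wCycleOf_mem_wCycles hδ)
    obtain ⟨γ, hγ, rfl⟩ := (hσ z hzv).surjOn (hΨz ▸ mem_terr_wCycleOf hδ)
    refine ⟨γ, terr_subset_of_mem_wCycles hzv hγ, ?_⟩
    simp only [← eq_wCycleOf hzv hγ]

lemma intertwines_glue {g : Wr K Γ → Γ → K} (hΨ : MapsTo Ψ (wCycles v) (wCycles w))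
    (hσ : ∀ z ∈ wCycles v, MapsTo (σ z) (terr z) (terr (Ψ z)))
    (hg : ∀ z ∈ wCycles v, Intertwines (σ z) (g z) (Ψ z) z (terr z)) :
    Intertwines (fun γ => σ (wCycleOf v γ) γ) (fun γ => g (wCycleOf v γ) γ) w v (terr v) := by
  intro γ hγ
  have hz := wCycleOf_mem_wCycles hγ
  have hγz := mem_terr_wCycleOf hγ
  have hσγ := hσ _ hz hγz
  obtain ⟨h₁, h₂⟩ := hg _ hz γ hγz
  rw [top_apply_of_mem_wCycles hz hγz] at h₁ h₂
  rw [top_apply_of_mem_wCycles (hΨ hz) hσγ] at h₁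
  rw [base_of_mem_wCycles (hΨ hz) hσγ, base_of_mem_wCycles hz hγz] at h₂
  simp only [wCycleOf_top_apply hγ]
  exact ⟨h₁, h₂⟩

end Glue

theorem isConj_of_ncard_load_eq {w v : Wr K Γ}
    (h : ∀ L, {z ∈ wCycles w | load z = L}.ncard = {z ∈ wCycles v | load z = L}.ncard) :
    IsConj w v := by
  obtain ⟨Ψ, hΨ, hload⟩ :=
    (finite_wCycles v).exists_bijOn_of_ncard_fiber_eq (finite_wCycles w) fun L => (h L).symm
  have hlocal (z : Wr K Γ) : ∃ (σ : Γ → Γ) (g : Γ → K), z ∈ wCycles v →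
      BijOn σ (terr z) (terr (Ψ z)) ∧ Intertwines σ g (Ψ z) z (terr z) := by
    by_cases hz : z ∈ wCycles v
    · obtain ⟨σ, g, hσg⟩ := (isWreathCycle_of_mem_wCycles (hΨ.mapsTo hz)).exists_intertwines
        (isWreathCycle_of_mem_wCycles hz) (hload z hz)
      exact ⟨σ, g, fun _ => hσg⟩
    · exact ⟨id, 1, fun h => absurd h hz⟩
  choose σ g hσg using hlocal
  exact isConj_of_bijOn_intertwines (bijOn_glue hΨ fun z hz => (hσg z hz).1)
    (intertwines_glue hΨ.mapsTo (fun z hz => (hσg z hz).1.mapsTo) fun z hz => (hσg z hz).2)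

end Wr

/-- `w, v` are conjugate in `S = K ≀_Γ Sym(Γ)` iff for every load `L`
they have the same number of wreath cycles of load `L`. -/
theorem isConj_iff_card_loads {K Γ : Type*} [Group K] [Fintype Γ] [DecidableEq Γ]
    (w v : Wr K Γ) :
    IsConj w v ↔
      ∀ L : Set K × ℕ,
        {z ∈ wCycles w | load z = L}.ncard = {z ∈ wCycles v | load z = L}.ncard := by
  refine ⟨fun h L => ?_, Wr.isConj_of_ncard_load_eq⟩
  obtain ⟨s, rfl⟩ := isConj_iff.mp h
  exact (Wr.ncard_load_conj s w L).symm
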